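/- For all positive integers a, b and every natural number ℓ: ∑_{j=1}^{a} (a!/(a-j)!)·∑_{i=j}^{ℓ} binom(ℓ,i)·b^i·S(i,j) = ∑_{j=1}^{b} (b!/(b-j)!)·∑_{i=j}^{ℓ} binom(ℓ,i)·a^i·S(i,j), where S denotes Stirling numbers of the second kind. -/

import Mathlib

/-!
Classifying the maps from an `i`-set to an `x`-set by the partition of their fibres gives
`x ^ i = ∑ⱼ x.descFactorial j * S(i, j)`. After exchanging the two sums, each side therefore
collapses to `∑_{i ≥ 1} (ℓ choose i) (a b) ^ i = (a b + 1) ^ ℓ - 1`, which is symmetric in `a`, `b`.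
-/

/-- Stirling numbers of the second kind. -/
def stirling2 : ℕ → ℕ → ℕ
  | 0, 0 => 1
  | 0, _ + 1 => 0
  | _ + 1, 0 => 0
  | n + 1, k + 1 => stirling2 n k + (k + 1) * stirling2 n (k + 1)

open Finset

theorem stirling2_eq_stirlingSecond : stirling2 = Nat.stirlingSecond := by
  funext n k
  induction n generalizing k with
  | zero => cases k <;> rfl
  | succ n ih => cases k <;> simp [stirling2, Nat.stirlingSecond, ih, add_comm]

namespace Nat

theorem descFactorial_succ_add_mul_descFactorial (x k : ℕ) :
    x.descFactorial (k + 1) + k * x.descFactorial k = x * x.descFactorial k := by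
  rcases le_or_gt k x with hkx | hxk
  · rw [descFactorial_succ, ← add_mul, Nat.sub_add_cancel hkx]
  · simp [descFactorial_eq_zero_iff_lt.2 hxk]

theorem sum_range_descFactorial_mul_stirlingSecond (x n : ℕ) :
    ∑ k ∈ range (n + 1), x.descFactorial k * stirlingSecond n k = x ^ n := by
  induction n with
  | zero => simp
  | succ n ih =>
    have hshift :
        ∑ k ∈ range (n + 1), x.descFactorial (k + 1) * ((k + 1) * stirlingSecond n (k + 1)) =
          ∑ k ∈ range (n + 1), k * x.descFactorial k * stirlingSecond n k := by
      let g k := k * x.descFactorial k * stirlingSecond n k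
      calc _ = ∑ k ∈ range (n + 1), g (k + 1) + g 0 := by
            simp only [g, zero_mul, add_zero]
            exact sum_congr rfl fun k _ => by ring
        _ = ∑ k ∈ range (n + 1), g k + g (n + 1) := by rw [← sum_range_succ', sum_range_succ]
        _ = _ := by simp [g, stirlingSecond_eq_zero_of_lt (lt_add_one n)]
    calc ∑ k ∈ range (n + 2), x.descFactorial k * stirlingSecond (n + 1) k
        = ∑ k ∈ range (n + 1), (x.descFactorial (k + 1) * ((k + 1) * stirlingSecond n (k + 1))
            + x.descFactorial (k + 1) * stirlingSecond n k) := by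
          simp [sum_range_succ' _ (n + 1), stirlingSecond_succ_succ, mul_add]
      _ = ∑ k ∈ range (n + 1),
            (x.descFactorial (k + 1) + k * x.descFactorial k) * stirlingSecond n k := by
          rw [sum_add_distrib, hshift, ← sum_add_distrib]
          exact sum_congr rfl fun k _ => by ring
      _ = x ^ (n + 1) := by
          simp_rw [descFactorial_succ_add_mul_descFactorial, mul_assoc, ← mul_sum, ih, pow_succ']

theorem sum_Icc_descFactorial_mul_stirlingSecond {n : ℕ} (hn : n ≠ 0) (x : ℕ) :
    ∑ k ∈ Icc 1 (min x n), x.descFactorial k * stirlingSecond n k = x ^ n := by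
  rw [← sum_range_descFactorial_mul_stirlingSecond]
  refine sum_subset (fun k hk => by simp only [mem_Icc, mem_range] at hk ⊢; omega) fun k _ hk => ?_
  simp only [mem_Icc, le_min_iff, not_and_or, not_le, Nat.lt_one_iff] at hk
  rcases hk with rfl | hxk | hnk
  · obtain ⟨m, rfl⟩ := exists_eq_succ_of_ne_zero hn
    simp
  · simp [descFactorial_eq_zero_iff_lt.2 hxk]
  · simp [stirlingSecond_eq_zero_of_lt hnk]

theorem sum_Icc_one_choose_mul_pow_add_one (z l : ℕ) :
    ∑ i ∈ Icc 1 l, l.choose i * z ^ i + 1 = (z + 1) ^ l := by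
  rw [add_pow, range_succ_eq_Icc_zero, ← insert_Icc_add_one_left_eq_Icc (zero_le l),
    sum_insert (by simp)]
  simp [add_comm, mul_comm]

end Nat

theorem sum_descFactorial_mul_sum_choose_mul_pow_mul_stirling2_add_one (x y l : ℕ) :
    ∑ j ∈ Icc 1 x, x.descFactorial j * ∑ i ∈ Icc j l, l.choose i * y ^ i * stirling2 i j + 1 =
      (x * y + 1) ^ l := by
  rw [stirling2_eq_stirlingSecond, ← Nat.sum_Icc_one_choose_mul_pow_add_one]
  congr 1
  calc _ = ∑ i ∈ Icc 1 l, l.choose i * y ^ i *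
        ∑ j ∈ Icc 1 (min x i), x.descFactorial j * Nat.stirlingSecond i j := by
        simp_rw [mul_sum]
        rw [sum_comm' (t' := Icc 1 l) (s' := fun i => Icc 1 (min x i))
          (fun j i => by simp only [mem_Icc, le_min_iff]; omega)]
        exact sum_congr rfl fun i _ => sum_congr rfl fun j _ => by ring
    _ = _ := sum_congr rfl fun i hi => by
        rw [Nat.sum_Icc_descFactorial_mul_stirlingSecond (by simp only [mem_Icc] at hi; omega)]
        ring

theorem stirling2_symmetric_relation_general (a b : ℕ) (l : ℕ) :
    ∑ j ∈ Finset.Icc 1 a, a.descFactorial j *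
        ∑ i ∈ Finset.Icc j l, l.choose i * b ^ i * stirling2 i j =
      ∑ j ∈ Finset.Icc 1 b, b.descFactorial j *
        ∑ i ∈ Finset.Icc j l, l.choose i * a ^ i * stirling2 i j := by
  have hab := sum_descFactorial_mul_sum_choose_mul_pow_mul_stirling2_add_one a b l
  have hba := sum_descFactorial_mul_sum_choose_mul_pow_mul_stirling2_add_one b a l
  rw [mul_comm b a] at hba
  omega

theorem stirling2_symmetric_relation (a b : ℕ) (ha : 0 < a) (hb : 0 < b) (l : ℕ) :
    ∑ j ∈ Finset.Icc 1 a, a.descFactorial j *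
        ∑ i ∈ Finset.Icc j l, l.choose i * b ^ i * stirling2 i j =
      ∑ j ∈ Finset.Icc 1 b, b.descFactorial j *
        ∑ i ∈ Finset.Icc j l, l.choose i * a ^ i * stirling2 i j :=
  stirling2_symmetric_relation_general a b l
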